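/- (Wainberg-style error-and-erasure weighting) Consider the concatenated code A·B with error-and-erasure row decoding: for row j with erasure set X_j, set w_j = 2·wt_{X_j}(Ê_j) + |X_j| if this is < d_b, and w_j = d_b on decoding failure; assign α_j = (d_b − w_j)/d_b. This decoder corrects all error-and-erasure patterns satisfying Σ_{i ∈ [M]} min{2·wt_{X_i}(E_i) + |X_i|, 2·d_b} < d_a·d_b. -/

import Mathlib

/-!
Every row contributes at most `min{2·wt_{X_j}(E_j) + |X_j|, 2·d_b} / d_b` to Forney's sum.
A correctly decoded row contributes `1 − α_j = w_j / d_b`, and then `w_j` is exactly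
`2·wt_{X_j}(E_j) + |X_j| < d_b`. A failed row contributes `1`, and failure means that even
`W_j` is not within the decoding radius, so `2·wt_{X_j}(E_j) + |X_j| ≥ d_b`. A wrongly
decoded row contributes `1 + α_j = (2·d_b − w_j) / d_b`; as `W_j ≠ Ŵ_j` are codewords,
`d_b ≤ d(W_j, Ŵ_j) ≤ wt_{X_j}(Ê_j) + wt_{X_j}(E_j) + |X_j|`, hence
`2·d_b ≤ w_j + 2·wt_{X_j}(E_j) + |X_j|`. Summing over the rows bounds Forney's sum by
`Σ_j min{…} / d_b < d_a`.
-/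

/-- Hamming weight of `v` punctured at the coordinates in `X`. -/
def wtX {N : ℕ} {Fq : Type*} [Zero Fq] [DecidableEq Fq]
    (X : Finset (Fin N)) (v : Fin N → Fq) : ℕ :=
  ((Finset.univ.filter fun n => v n ≠ 0) \ X).card

section

variable {Fq : Type*} [AddGroup Fq] [DecidableEq Fq] {N : ℕ} (X : Finset (Fin N))

theorem wtX_sub_le (a b : Fin N → Fq) : wtX X (a - b) ≤ wtX X a + wtX X b := by
  refine (Finset.card_le_card ?_).trans (Finset.card_union_le _ _)
  intro n
  simp only [Finset.mem_sdiff, Finset.mem_union, Finset.mem_filter, Finset.mem_univ, true_and,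
    Pi.sub_apply]
  rintro ⟨hab, hX⟩
  by_cases ha : a n = 0
  · exact Or.inr ⟨fun hb => hab (by rw [ha, hb, sub_zero]), hX⟩
  · exact Or.inl ⟨ha, hX⟩

theorem hammingDist_le_wtX_sub_add_card (u v : Fin N → Fq) :
    hammingDist u v ≤ wtX X (u - v) + X.card := by
  simpa only [hammingDist, wtX, Pi.sub_apply, sub_ne_zero] using Finset.card_le_card_sdiff_add_card

end

section

variable {Fq : Type*} [AddCommGroup Fq] [DecidableEq Fq] {N d : ℕ}

def clippedErasureCost (d : ℕ) (X : Finset (Fin N)) (e : Fin N → Fq) : ℕ :=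
  min (2 * wtX X e + X.card) (2 * d)

/-- `α_j` of a row received as `r` and decoded to `c`; failed rows get `α_j = 0` instead. -/
noncomputable def reliability (d : ℕ) (X : Finset (Fin N)) (r c : Fin N → Fq) : ℝ :=
  ((d : ℝ) - (2 * (wtX X (r - c) : ℝ) + (X.card : ℝ))) / d

variable {B : Set (Fin N → Fq)} {X : Finset (Fin N)} {w e c : Fin N → Fq}

theorem one_le_clippedErasureCost_div (hd : 0 < d) (hw : w ∈ B)
    (hfail : ¬∃ c ∈ B, 2 * wtX X (w + e - c) + X.card < d) :
    1 ≤ (clippedErasureCost d X e : ℝ) / d := by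
  have hcost : d ≤ 2 * wtX X e + X.card :=
    not_lt.mp fun h => hfail ⟨w, hw, by rwa [add_sub_cancel_left]⟩
  rw [one_le_div (by exact_mod_cast hd)]
  exact_mod_cast le_min hcost (by omega)

theorem two_mul_le_add_clippedErasureCost
    (hB : ∀ u ∈ B, ∀ v ∈ B, u ≠ v → d ≤ hammingDist u v) (hw : w ∈ B) (hc : c ∈ B)
    (hcw : c ≠ w) : 2 * d ≤ 2 * wtX X (w + e - c) + X.card + clippedErasureCost d X e := by
  have hsub : wtX X (w - c) ≤ wtX X (w + e - c) + wtX X e := by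
    simpa only [show w + e - c - e = w - c by abel] using wtX_sub_le X (w + e - c) e
  have hdist : d ≤ wtX X (w - c) + X.card :=
    (hB w hw c hc hcw.symm).trans (hammingDist_le_wtX_sub_add_card X w c)
  unfold clippedErasureCost
  omega

theorem one_sub_ite_reliability_le (hd : 0 < d) (hw : w ∈ B) (hcw : c = w)
    (failed : Prop) [Decidable failed]
    (hsucc : ¬failed → 2 * wtX X (w + e - c) + X.card < d)
    (hfail : failed → ¬∃ c ∈ B, 2 * wtX X (w + e - c) + X.card < d) :
    1 - (if failed then 0 else reliability d X (w + e) c) ≤ (clippedErasureCost d X e : ℝ) / d := by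
  subst hcw
  split_ifs with hf
  · simpa only [sub_zero] using one_le_clippedErasureCost_div hd hw (hfail hf)
  · have hcost := hsucc hf
    rw [add_sub_cancel_left] at hcost
    have hclip : clippedErasureCost d X e = 2 * wtX X e + X.card := by
      unfold clippedErasureCost; omega
    rw [hclip, reliability, add_sub_cancel_left]
    field_simp
    push_cast
    linarith

theorem one_add_ite_reliability_le (hd : 0 < d)
    (hB : ∀ u ∈ B, ∀ v ∈ B, u ≠ v → d ≤ hammingDist u v) (hw : w ∈ B) (hcw : c ≠ w)
    (failed : Prop) [Decidable failed] (hsucc : ¬failed → c ∈ B)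
    (hfail : failed → ¬∃ c ∈ B, 2 * wtX X (w + e - c) + X.card < d) :
    1 + (if failed then 0 else reliability d X (w + e) c) ≤ (clippedErasureCost d X e : ℝ) / d := by
  split_ifs with hf
  · simpa only [add_zero] using one_le_clippedErasureCost_div hd hw (hfail hf)
  · have h : (2 * d : ℝ) ≤ 2 * wtX X (w + e - c) + X.card + clippedErasureCost d X e := by
      exact_mod_cast two_mul_le_add_clippedErasureCost hB hw (hsucc hf) hcw
    rw [reliability, le_div_iff₀ (by positivity)]
    field_simp
    linarith

end

theorem concatenated_error_and_erasure_decoder_corrects_general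
    {Fq : Type*} [Field Fq] [DecidableEq Fq]
    {M N da db : ℕ}
    (Bcode : Set (Fin N → Fq))
    (hB : ∀ u ∈ Bcode, ∀ v ∈ Bcode, u ≠ v → db ≤ hammingDist u v)
    (W E : Fin M → Fin N → Fq) (hW : ∀ j, W j ∈ Bcode)
    (X : Fin M → Finset (Fin N))
    (What : Fin M → Fin N → Fq) (fail : Finset (Fin M))
    (hdec1 : ∀ j ∉ fail,
      What j ∈ Bcode ∧ 2 * wtX (X j) (W j + E j - What j) + (X j).card < db)
    (hdec2 : ∀ j ∈ fail, ¬ ∃ c ∈ Bcode, 2 * wtX (X j) (W j + E j - c) + (X j).card < db)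
    (hE : ∑ j, min (2 * wtX (X j) (E j) + (X j).card) (2 * db) < da * db) :
    (∑ j ∈ Finset.univ.filter fun j => What j = W j,
      (1 - (if j ∈ fail then 0 else
        ((db : ℝ) - (2 * (wtX (X j) (W j + E j - What j) : ℝ) + ((X j).card : ℝ))) / (db : ℝ)))) +
    (∑ j ∈ Finset.univ.filter fun j => What j ≠ W j,
      (1 + (if j ∈ fail then 0 else
        ((db : ℝ) - (2 * (wtX (X j) (W j + E j - What j) : ℝ) + ((X j).card : ℝ))) / (db : ℝ))))
    < (da : ℝ) := by
  have hdb : 0 < db := Nat.pos_of_ne_zero fun h => by simp [h] at hE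
  set cost := fun j => (clippedErasureCost db (X j) (E j) : ℝ) / db
  calc _ ≤ (∑ j ∈ Finset.univ.filter fun j => What j = W j, cost j) +
        ∑ j ∈ Finset.univ.filter fun j => What j ≠ W j, cost j := by
        gcongr with j hj j hj
        · exact one_sub_ite_reliability_le hdb (hW j) (Finset.mem_filter.1 hj).2 _
            (fun hf => (hdec1 j hf).2) (hdec2 j)
        · exact one_add_ite_reliability_le hdb hB (hW j) (Finset.mem_filter.1 hj).2 _
            (fun hf => (hdec1 j hf).1) (hdec2 j)
    _ = (∑ j, (clippedErasureCost db (X j) (E j) : ℝ)) / db := by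
        rw [Finset.sum_filter_add_sum_filter_not, Finset.sum_div]
    _ < da := by
        rw [div_lt_iff₀ (by positivity)]
        exact_mod_cast hE

/-- Wainberg-style error-and-erasure decoding of the concatenated code `A·B`:
each row `j` of `R = W + E` (with erasure set `X j`) is decoded with an
error-and-erasure decoder for the inner code (`What j` is the output; `fail`
the set of rows on which no inner codeword `c` satisfies
`2·wt_{X_j}(R_j − c) + |X_j| < d_b`).  Row `j` is given the reliability weight
`α_j = (d_b − w_j)/d_b`, with `w_j = 2·wt_{X_j}(Ê_j) + |X_j|` on success and
`w_j = d_b` on failure.  If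
`Σ_j min{2·wt_{X_j}(E_j) + |X_j|, 2·d_b} < d_a·d_b`, then Forney's GMD
condition `Σ_{j ∈ I_C}(1 − α_j) + Σ_{j ∈ I_E}(1 + α_j) < d_a` holds, so the
GMD decoder for the outer code recovers every column of the transmitted
codeword. -/
theorem concatenated_error_and_erasure_decoder_corrects
    {Fq : Type*} [Field Fq] [Fintype Fq] [DecidableEq Fq]
    {M N da db : ℕ} (hdb : 0 < db)
    (Bcode : Set (Fin N → Fq))
    (hB : ∀ u ∈ Bcode, ∀ v ∈ Bcode, u ≠ v → db ≤ hammingDist u v)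
    (W E : Fin M → Fin N → Fq) (hW : ∀ j, W j ∈ Bcode)
    (X : Fin M → Finset (Fin N))
    (What : Fin M → Fin N → Fq) (fail : Finset (Fin M))
    (hdec1 : ∀ j ∉ fail,
      What j ∈ Bcode ∧ 2 * wtX (X j) (W j + E j - What j) + (X j).card < db)
    (hdec2 : ∀ j ∈ fail, ¬ ∃ c ∈ Bcode, 2 * wtX (X j) (W j + E j - c) + (X j).card < db)
    (hE : ∑ j, min (2 * wtX (X j) (E j) + (X j).card) (2 * db) < da * db) :
    (∑ j ∈ Finset.univ.filter fun j => What j = W j,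
      (1 - (if j ∈ fail then 0 else
        ((db : ℝ) - (2 * (wtX (X j) (W j + E j - What j) : ℝ) + ((X j).card : ℝ))) / (db : ℝ)))) +
    (∑ j ∈ Finset.univ.filter fun j => What j ≠ W j,
      (1 + (if j ∈ fail then 0 else
        ((db : ℝ) - (2 * (wtX (X j) (W j + E j - What j) : ℝ) + ((X j).card : ℝ))) / (db : ℝ))))
    < (da : ℝ) :=
  concatenated_error_and_erasure_decoder_corrects_general Bcode hB W E hW X What fail hdec1 hdec2 hE
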